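/- For x ∈ S^m ⊂ ℝ^{m+1} and y ∈ S³ ⊂ ℝ⁴, the m+3 vectors b_i = (M_i(x), x_i • T₁(y)) for i = 1,…,m+1 and b_{m+j} = (0, T_j(y)) for j = 2,3 form an orthonormal basis of T_x S^m × T_y S³ ⊂ ℝ^{m+1} × ℝ⁴, where M_i(x) = e_i - x_i x and T₁, T₂, T₃ are the quaternionic tangent fields on S³. -/

import Mathlib

open scoped RealInnerProductSpace

noncomputable def meridian {m : ℕ} (x : EuclideanSpace ℝ (Fin (m + 1))) (i : Fin (m + 1)) :
    EuclideanSpace ℝ (Fin (m + 1)) :=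
  EuclideanSpace.single i 1 - x i • x

noncomputable def T₁ (y : EuclideanSpace ℝ (Fin 4)) : EuclideanSpace ℝ (Fin 4) :=
  WithLp.toLp 2 ![-y 1, y 0, -y 3, y 2]

noncomputable def T₂ (y : EuclideanSpace ℝ (Fin 4)) : EuclideanSpace ℝ (Fin 4) :=
  WithLp.toLp 2 ![-y 2, y 3, y 0, -y 1]

noncomputable def T₃ (y : EuclideanSpace ℝ (Fin 4)) : EuclideanSpace ℝ (Fin 4) :=
  WithLp.toLp 2 ![-y 3, -y 2, y 1, y 0]

/-- The inner product on the orthogonal direct sum `ℝ^{m+1} ⊕ ℝ⁴`. -/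
noncomputable def innP {m : ℕ}
    (u v : EuclideanSpace ℝ (Fin (m + 1)) × EuclideanSpace ℝ (Fin 4)) : ℝ :=
  ⟪u.1, v.1⟫ + ⟪u.2, v.2⟫

/-- The frame `𝓑` on `Sᵐ × S³`: `bᵢ = (Mᵢ(x), xᵢ T₁(y))` for `i = 1,…,m+1` and
`b_{m+2} = (0, T₂(y))`, `b_{m+3} = (0, T₃(y))`. -/
noncomputable def bFrame {m : ℕ} (x : EuclideanSpace ℝ (Fin (m + 1)))
    (y : EuclideanSpace ℝ (Fin 4)) :
    Fin (m + 1) ⊕ Fin 2 → EuclideanSpace ℝ (Fin (m + 1)) × EuclideanSpace ℝ (Fin 4) :=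
  Sum.elim (fun i => (meridian x i, x i • T₁ y))
    (fun j => (0, if j = 0 then T₂ y else T₃ y))

/- ### Auxiliary lemmas -/

lemma innerE {n : ℕ} (a b : EuclideanSpace ℝ (Fin n)) : ⟪a, b⟫ = ∑ i, a i * b i := by
  simp [PiLp.inner_apply]
  exact Finset.sum_congr rfl fun i _ => mul_comm _ _

lemma inner4 (u v : EuclideanSpace ℝ (Fin 4)) :
    ⟪u, v⟫ = u 0 * v 0 + u 1 * v 1 + u 2 * v 2 + u 3 * v 3 := by
  simp [PiLp.inner_apply, Fin.sum_univ_four]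
  ring

lemma sum_single_aux {n : ℕ} (x : EuclideanSpace ℝ (Fin n)) :
    ∑ i, x i • EuclideanSpace.single i (1:ℝ) = x := by
  ext j
  have h : (∑ i, x i • EuclideanSpace.single i (1:ℝ)) j
      = ∑ i, (x i • EuclideanSpace.single i (1:ℝ)) j := by rw [WithLp.ofLp_sum, Finset.sum_apply]
  rw [h]
  simp [EuclideanSpace.single_apply]

lemma recon_aux (y v : EuclideanSpace ℝ (Fin 4))
    (hy4 : y 0 * y 0 + y 1 * y 1 + y 2 * y 2 + y 3 * y 3 = 1) (hyv : ⟪y, v⟫ = 0) :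
    v = ⟪T₁ y, v⟫ • T₁ y + ⟪T₂ y, v⟫ • T₂ y + ⟪T₃ y, v⟫ • T₃ y := by
  rw [inner4] at hyv
  ext k
  simp only [PiLp.add_apply, PiLp.smul_apply, inner4, T₁, T₂, T₃, smul_eq_mul]
  fin_cases k <;>
    simp [Matrix.cons_val_zero, Matrix.cons_val_one, Matrix.head_cons] <;>
    [(linear_combination -(v 0) * hy4 + y 0 * hyv);
     (linear_combination -(v 1) * hy4 + y 1 * hyv);
     (linear_combination -(v 2) * hy4 + y 2 * hyv);
     (linear_combination -(v 3) * hy4 + y 3 * hyv)]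

/-- The `m+3` vectors `bᵢ`, `b_{m+2}`, `b_{m+3}` form an orthonormal basis of
`T_x Sᵐ × T_y S³ = x^⊥ × y^⊥ ⊂ ℝ^{m+1} × ℝ⁴`. -/
theorem stmt_8 (m : ℕ) (hm : 1 ≤ m) (x : EuclideanSpace ℝ (Fin (m + 1)))
    (y : EuclideanSpace ℝ (Fin 4)) (hx : ‖x‖ = 1) (hy : ‖y‖ = 1) :
    (∀ k l, innP (bFrame x y k) (bFrame x y l) = if k = l then (1 : ℝ) else 0) ∧
    (∀ k, bFrame x y k ∈ Submodule.prod (ℝ ∙ x)ᗮ (ℝ ∙ y)ᗮ) ∧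
    Submodule.span ℝ (Set.range (bFrame x y)) = Submodule.prod (ℝ ∙ x)ᗮ (ℝ ∙ y)ᗮ := by
  have hxx : ⟪x, x⟫ = 1 := by rw [real_inner_self_eq_norm_sq, hx]; norm_num
  have hyy : ⟪y, y⟫ = 1 := by rw [real_inner_self_eq_norm_sq, hy]; norm_num
  have hy4 : y 0 * y 0 + y 1 * y 1 + y 2 * y 2 + y 3 * y 3 = 1 := by
    rw [inner4] at hyy; exact hyy
  have n11 : ⟪T₁ y, T₁ y⟫ = 1 := by
    rw [inner4]; simp only [T₁]
    norm_num [Matrix.cons_val_zero, Matrix.cons_val_one, Matrix.head_cons, Matrix.cons_val_two, Matrix.cons_val_three, Matrix.tail_cons]; linarith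
  have n22 : ⟪T₂ y, T₂ y⟫ = 1 := by
    rw [inner4]; simp only [T₂]
    norm_num [Matrix.cons_val_zero, Matrix.cons_val_one, Matrix.head_cons, Matrix.cons_val_two, Matrix.cons_val_three, Matrix.tail_cons]; linarith
  have n33 : ⟪T₃ y, T₃ y⟫ = 1 := by
    rw [inner4]; simp only [T₃]
    norm_num [Matrix.cons_val_zero, Matrix.cons_val_one, Matrix.head_cons, Matrix.cons_val_two, Matrix.cons_val_three, Matrix.tail_cons]; linarith
  have o12 : ⟪T₁ y, T₂ y⟫ = 0 := by
    rw [inner4]; simp only [T₁, T₂]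
    norm_num [Matrix.cons_val_zero, Matrix.cons_val_one, Matrix.head_cons, Matrix.cons_val_two, Matrix.cons_val_three, Matrix.tail_cons]; ring
  have o13 : ⟪T₁ y, T₃ y⟫ = 0 := by
    rw [inner4]; simp only [T₁, T₃]
    norm_num [Matrix.cons_val_zero, Matrix.cons_val_one, Matrix.head_cons, Matrix.cons_val_two, Matrix.cons_val_three, Matrix.tail_cons]; ring
  have o23 : ⟪T₂ y, T₃ y⟫ = 0 := by
    rw [inner4]; simp only [T₂, T₃]
    norm_num [Matrix.cons_val_zero, Matrix.cons_val_one, Matrix.head_cons, Matrix.cons_val_two, Matrix.cons_val_three, Matrix.tail_cons]; ring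
  have o21 : ⟪T₂ y, T₁ y⟫ = 0 := by rw [real_inner_comm]; exact o12
  have o31 : ⟪T₃ y, T₁ y⟫ = 0 := by rw [real_inner_comm]; exact o13
  have o32 : ⟪T₃ y, T₂ y⟫ = 0 := by rw [real_inner_comm]; exact o23
  have oy1 : ⟪y, T₁ y⟫ = 0 := by
    rw [inner4]; simp only [T₁]
    norm_num [Matrix.cons_val_zero, Matrix.cons_val_one, Matrix.head_cons, Matrix.cons_val_two, Matrix.cons_val_three, Matrix.tail_cons]; ring
  have oy2 : ⟪y, T₂ y⟫ = 0 := by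
    rw [inner4]; simp only [T₂]
    norm_num [Matrix.cons_val_zero, Matrix.cons_val_one, Matrix.head_cons, Matrix.cons_val_two, Matrix.cons_val_three, Matrix.tail_cons]; ring
  have oy3 : ⟪y, T₃ y⟫ = 0 := by
    rw [inner4]; simp only [T₃]
    norm_num [Matrix.cons_val_zero, Matrix.cons_val_one, Matrix.head_cons, Matrix.cons_val_two, Matrix.cons_val_three, Matrix.tail_cons]; ring
  have hss : ∀ i j : Fin (m+1),
      ⟪(EuclideanSpace.single i (1:ℝ)), EuclideanSpace.single j (1:ℝ)⟫
        = if i = j then (1:ℝ) else 0 := by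
    intro i j
    simp [EuclideanSpace.inner_single_left, EuclideanSpace.single_apply, eq_comm]
  have hMM : ∀ i j, ⟪meridian x i, meridian x j⟫ = (if i = j then (1:ℝ) else 0) - x i * x j := by
    intro i j
    simp only [meridian, inner_sub_left, inner_sub_right, real_inner_smul_left,
      real_inner_smul_right, hss, EuclideanSpace.inner_single_left,
      EuclideanSpace.inner_single_right, conj_trivial, hxx]
    simp only [PiLp.smul_apply, smul_eq_mul]
    ring
  have hxM : ∀ i, ⟪x, meridian x i⟫ = 0 := by
    intro i
    simp only [meridian, inner_sub_right, real_inner_smul_right,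
      EuclideanSpace.inner_single_right, conj_trivial, hxx]
    ring
  -- orthonormality
  have horth : ∀ k l, innP (bFrame x y k) (bFrame x y l) = if k = l then (1 : ℝ) else 0 := by
    rintro (i | j) (i' | j')
    · simp only [bFrame, Sum.elim_inl, innP, Sum.inl.injEq]
      rw [hMM, real_inner_smul_left, real_inner_smul_right, n11]
      split_ifs <;> ring
    · simp only [bFrame, Sum.elim_inl, Sum.elim_inr, innP]
      by_cases hj : j' = 0
      · rw [if_pos hj, inner_zero_right, real_inner_smul_left, o12]
        simp
      · rw [if_neg hj, inner_zero_right, real_inner_smul_left, o13]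
        simp
    · simp only [bFrame, Sum.elim_inl, Sum.elim_inr, innP]
      by_cases hj : j = 0
      · rw [if_pos hj, inner_zero_left, real_inner_smul_right, o21]
        simp
      · rw [if_neg hj, inner_zero_left, real_inner_smul_right, o31]
        simp
    · simp only [bFrame, Sum.elim_inr, innP]
      by_cases hj : j = 0 <;> by_cases hj' : j' = 0
      · rw [if_pos hj, if_pos hj', inner_zero_left, n22, hj, hj']
        simp
      · rw [if_pos hj, if_neg hj', inner_zero_left, o23, if_neg (by simp [hj, Ne.symm hj'])]
        ring
      · rw [if_neg hj, if_pos hj', inner_zero_left, o32, if_neg (by simp [hj', hj])]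
        ring
      · rw [if_neg hj, if_neg hj', inner_zero_left, n33, if_pos (by
          have h2 : j = 1 := by omega
          have h2' : j' = 1 := by omega
          rw [h2, h2'])]
        ring
  -- membership
  have hmem : ∀ k, bFrame x y k ∈ Submodule.prod (ℝ ∙ x)ᗮ (ℝ ∙ y)ᗮ := by
    rintro (i | j)
    · refine Submodule.mem_prod.2 ⟨?_, ?_⟩
      · exact Submodule.mem_orthogonal_singleton_iff_inner_right.2 (hxM i)
      · exact Submodule.smul_mem _ _
          (Submodule.mem_orthogonal_singleton_iff_inner_right.2 oy1)
    · refine Submodule.mem_prod.2 ⟨Submodule.zero_mem _, ?_⟩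
      by_cases hj : j = 0 <;>
        simp only [bFrame, Sum.elim_inr, hj, if_true, if_false, reduceIte] <;>
        first
          | exact Submodule.mem_orthogonal_singleton_iff_inner_right.2 oy2
          | exact Submodule.mem_orthogonal_singleton_iff_inner_right.2 oy3
  refine ⟨horth, hmem, ?_⟩
  -- span
  apply le_antisymm
  · rw [Submodule.span_le]
    rintro u ⟨k, rfl⟩
    exact hmem k
  · set S := Submodule.span ℝ (Set.range (bFrame x y)) with hS
    rintro ⟨u, v⟩ huv
    rw [Submodule.mem_prod] at huv
    obtain ⟨hu1, hv1⟩ := huv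
    have hxu : ⟪x, u⟫ = 0 := Submodule.mem_orthogonal_singleton_iff_inner_right.1 hu1
    have hyv : ⟪y, v⟫ = 0 := Submodule.mem_orthogonal_singleton_iff_inner_right.1 hv1
    have hsum_mer : ∀ (w : EuclideanSpace ℝ (Fin (m+1))),
        ∑ i, w i • bFrame x y (Sum.inl i)
          = (w - (∑ i, w i * x i) • x, (∑ i, w i * x i) • T₁ y) := by
      intro w
      simp only [bFrame, Sum.elim_inl, Prod.smul_mk]
      rw [Prod.ext_iff]
      constructor
      · rw [Prod.fst_sum]
        simp only [meridian, smul_sub, Finset.sum_sub_distrib, smul_smul,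
          ← Finset.sum_smul, sum_single_aux]
      · rw [Prod.snd_sum]
        simp only [smul_smul, ← Finset.sum_smul]
    have hsum_mem : ∀ (w : EuclideanSpace ℝ (Fin (m+1))),
        (∑ i, w i • bFrame x y (Sum.inl i)) ∈ S :=
      fun w => Submodule.sum_mem S fun i _ =>
        Submodule.smul_mem S _ (Submodule.subset_span ⟨Sum.inl i, rfl⟩)
    have hxs : ∑ i, x i * x i = 1 := by rw [← innerE]; exact hxx
    have hus : ∑ i, u i * x i = 0 := by
      rw [← innerE, real_inner_comm]; exact hxu
    have hb1 : ((0 : EuclideanSpace ℝ (Fin (m+1))), T₁ y) ∈ S := by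
      have h := hsum_mer x
      rw [hxs, one_smul, sub_self, one_smul] at h
      exact h ▸ hsum_mem x
    have hb2 : ((0 : EuclideanSpace ℝ (Fin (m+1))), T₂ y) ∈ S :=
      Submodule.subset_span ⟨Sum.inr 0, by simp [bFrame]⟩
    have hb3 : ((0 : EuclideanSpace ℝ (Fin (m+1))), T₃ y) ∈ S :=
      Submodule.subset_span ⟨Sum.inr 1, by simp [bFrame]⟩
    have hu0 : ((u, 0) : EuclideanSpace ℝ (Fin (m+1)) × EuclideanSpace ℝ (Fin 4)) ∈ S := by
      have h := hsum_mer u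
      rw [hus, zero_smul, sub_zero, zero_smul] at h
      exact h ▸ hsum_mem u
    have hv0 : (((0 : EuclideanSpace ℝ (Fin (m+1))), v)) ∈ S := by
      have hrec := recon_aux y v hy4 hyv
      have heq : (((0 : EuclideanSpace ℝ (Fin (m+1))), v))
          = ⟪T₁ y, v⟫ • ((0 : EuclideanSpace ℝ (Fin (m+1))), T₁ y)
            + ⟪T₂ y, v⟫ • ((0 : EuclideanSpace ℝ (Fin (m+1))), T₂ y)
            + ⟪T₃ y, v⟫ • ((0 : EuclideanSpace ℝ (Fin (m+1))), T₃ y) := by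
        simp only [Prod.smul_mk, Prod.mk_add_mk, smul_zero, add_zero, Prod.mk.injEq]
        exact ⟨trivial, hrec⟩
      rw [heq]
      exact add_mem (add_mem (Submodule.smul_mem S _ hb1) (Submodule.smul_mem S _ hb2))
        (Submodule.smul_mem S _ hb3)
    have hsplit : ((u, v) : EuclideanSpace ℝ (Fin (m+1)) × EuclideanSpace ℝ (Fin 4))
        = (u, 0) + (0, v) := by simp
    rw [hsplit]
    exact add_mem hu0 hv0
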